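/- For r = 3 and m ≥ 73, every pair (m,f) with 0 < f < C(m,3) satisfies σ_3(m,f) ≤ 13/25. -/

import Mathlib

open Finset
open scoped Classical

/-- `(n,e) →_r (m,f)`: every `r`-uniform hypergraph on `n` vertices with `e` edges
has an induced sub-hypergraph on `m` vertices with exactly `f` edges. -/
def PairArrows (r n e m f : ℕ) : Prop :=
  ∀ G : Finset (Finset (Fin n)), (∀ s ∈ G, s.card = r) → G.card = e →
    ∃ S : Finset (Fin n), S.card = m ∧ (G.filter (fun t => t ⊆ S)).card = f

/-- The density `σ_r(m,f)`. -/
noncomputable def sigmaR (r m f : ℕ) : ℝ :=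
  Filter.limsup
    (fun n : ℕ =>
      (((Finset.range (n.choose r + 1)).filter (fun e => PairArrows r n e m f)).card : ℝ) /
        (n.choose r : ℝ))
    Filter.atTop

/-!
Colour the vertices `Fin n` by their residues mod 5 and let `H` be the 3-graph of rainbow
triples. Its size is the elementary symmetric function `e₃` of the five colour-class sizes, which
are balanced, so `|H| ≥ (12/25) C(n,3)`. On any `m` vertices the number of rainbow triples is
`e₃` of some five class sizes summing to `m`; smoothing shows that `e₃` is largest at a balanced
partition, and for `m ≥ 73` this maximum is below `C(m,3)/2`.

If `2f ≥ C(m,3)`, no subgraph of `H` arrows `(m,f)`, so `(n,e) →₃ (m,f)` forces `e > |H|`.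
If `2f < C(m,3)`, pass to complements: `(n,e) →₃ (m,f)` gives `(n, C(n,3) - e) →₃ (m, C(m,3) - f)`,
so `C(n,3) - e > |H|`. Either way at most `C(n,3) - |H| ≤ (13/25) C(n,3)` values of `e` arrow.
-/

namespace Multiset

variable {R : Type*} [CommSemiring R]

theorem esymm_zero_right (s : Multiset R) : s.esymm 0 = 1 := by
  simp [esymm]

theorem esymm_zero_succ (k : ℕ) : (0 : Multiset R).esymm (k + 1) = 0 := by
  simp [esymm, powersetCard_zero_right]

theorem esymm_cons_succ (a : R) (s : Multiset R) (k : ℕ) :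
    (a ::ₘ s).esymm (k + 1) = a * s.esymm k + s.esymm (k + 1) := by
  simp [esymm, powersetCard_cons, map_map, sum_map_mul_left, add_comm]

theorem esymm_cons_cons_le {x y : ℕ} (hxy : x + 2 ≤ y) (s : Multiset ℕ) (k : ℕ) :
    (x ::ₘ y ::ₘ s).esymm k ≤ ((x + 1) ::ₘ (y - 1) ::ₘ s).esymm k := by
  obtain ⟨z, rfl⟩ : ∃ z, y = z + 1 := ⟨y - 1, by omega⟩
  have hprod : x * (z + 1) ≤ (x + 1) * z := by nlinarith
  rcases k with _ | _ | k
  · simp only [esymm_zero_right, le_refl]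
  · simp only [zero_add, esymm_cons_succ, esymm_zero_right]
    omega
  · simp only [esymm_cons_succ, add_tsub_cancel_right]
    nlinarith

theorem exists_balanced_esymm_le (M : Multiset ℕ) :
    ∃ N : Multiset ℕ, ∃ v, card N = card M ∧ N.sum = M.sum ∧ (∀ x ∈ N, x = v ∨ x = v + 1) ∧
      ∀ k, M.esymm k ≤ N.esymm k := by
  induction hq : (M.map (· ^ 2)).sum using Nat.strong_induction_on generalizing M with
  | _ q ih =>
  by_cases hspread : ∃ x ∈ M, ∃ y ∈ M, x + 2 ≤ y
  · obtain ⟨x, hx, y, hy, hxy⟩ := hspread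
    obtain ⟨s, rfl⟩ : ∃ s, M = x ::ₘ y ::ₘ s := by
      obtain ⟨M', rfl⟩ := exists_cons_of_mem hx
      obtain ⟨s, rfl⟩ := exists_cons_of_mem ((mem_cons.1 hy).resolve_left (by omega))
      exact ⟨s, rfl⟩
    have hsq : (x + 1) ^ 2 + (y - 1) ^ 2 < x ^ 2 + y ^ 2 := by
      obtain ⟨z, rfl⟩ : ∃ z, y = z + 2 := ⟨y - 2, by omega⟩
      rw [show z + 2 - 1 = z + 1 by omega]
      nlinarith
    obtain ⟨N, v, hcard, hsum, hbal, hle⟩ :=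
      ih _ (by simp only [map_cons, sum_cons] at hq ⊢; omega) ((x + 1) ::ₘ (y - 1) ::ₘ s) rfl
    refine ⟨N, v, by simpa using hcard, ?_, hbal,
      fun k => (esymm_cons_cons_le hxy s k).trans (hle k)⟩
    simp only [sum_cons] at hsum ⊢
    omega
  · push Not at hspread
    rcases M.empty_or_exists_mem with rfl | ⟨x₀, hx₀⟩
    · exact ⟨0, 0, rfl, rfl, by simp, fun _ => le_rfl⟩
    have hne : M.toFinset.Nonempty := ⟨x₀, by simpa using hx₀⟩
    have hmin : M.toFinset.min' hne ∈ M := by simpa using min'_mem _ hne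
    refine ⟨M, M.toFinset.min' hne, rfl, rfl, fun x hx => ?_, fun _ => le_rfl⟩
    have h₁ := min'_le M.toFinset x (by simpa using hx)
    have h₂ := hspread _ hmin x hx
    omega

end Multiset

/-- `e₃` of the five numbers consisting of `k` copies of `v + 1` and `5 - k` copies of `v`. -/
def esymmThreeBalanced (v k : ℕ) : ℕ :=
  10 * v ^ 3 + 6 * k * v ^ 2 + 3 * k.choose 2 * v + k.choose 3

theorem Multiset.exists_esymm_three_eq_of_balanced {N : Multiset ℕ} {v : ℕ} (hN : card N = 5)
    (hbal : ∀ x ∈ N, x = v ∨ x = v + 1) :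
    ∃ k ≤ 5, N.sum = 5 * v + k ∧ N.esymm 3 = esymmThreeBalanced v k := by
  have hsplit := filter_add_not (· = v + 1) N
  rw [eq_replicate_of_mem (fun x hx => (mem_filter.1 hx).2),
    eq_replicate_of_mem (a := v) (fun x hx => ((hbal x (mem_filter.1 hx).1).resolve_right
      (mem_filter.1 hx).2))] at hsplit
  have hcard := congrArg card hsplit
  rw [card_add, card_replicate, card_replicate, hN] at hcard
  rw [← hsplit]
  generalize card (filter (· = v + 1) N) = k at hcard ⊢
  rw [show card (filter (fun x => ¬ x = v + 1) N) = 5 - k by omega]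
  have hk : k ≤ 5 := by omega
  refine ⟨k, hk, ?_⟩
  interval_cases k <;>
    simp only [Nat.sub_self, replicate_succ, replicate_zero, cons_add, zero_add, add_zero,
      esymm_cons_succ, esymm_zero_right, esymm_zero_succ, sum_cons, sum_zero] <;>
    simp [esymmThreeBalanced, Nat.choose] <;> constructor <;> ring

theorem six_mul_choose_three (m : ℕ) : 6 * m.choose 3 = m * (m - 1) * (m - 2) := by
  have := Nat.descFactorial_eq_factorial_mul_choose m 3
  simp [Nat.descFactorial, Nat.factorial] at this
  grind

theorem two_mul_esymmThreeBalanced_lt_choose {v k : ℕ} (hk : k ≤ 5) (hm : 73 ≤ 5 * v + k) :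
    2 * esymmThreeBalanced v k < (5 * v + k).choose 3 := by
  have h6 := six_mul_choose_three (5 * v + k)
  generalize (5 * v + k).choose 3 = C at h6 ⊢
  -- for `k ≤ 2` the cubic bound needs `15 ≤ v`, which `hm` yields only through integrality
  obtain rfl | hv : v = 14 ∨ 15 ≤ v := by omega
  · interval_cases k <;> simp [esymmThreeBalanced, Nat.choose] at h6 hm ⊢ <;> omega
  interval_cases k <;> simp [esymmThreeBalanced, Nat.choose] at h6 ⊢ <;>
  · zify [show 1 ≤ 5 * v by omega, show 2 ≤ 5 * v by omega] at h6 ⊢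
    nlinarith

theorem twelve_mul_choose_le_esymmThreeBalanced {v k : ℕ} (hk : k ≤ 5) :
    12 * (5 * v + k).choose 3 ≤ 25 * esymmThreeBalanced v k := by
  rcases Nat.eq_zero_or_pos v with rfl | hv
  · interval_cases k <;> decide
  have h6 := six_mul_choose_three (5 * v + k)
  generalize (5 * v + k).choose 3 = C at h6 ⊢
  interval_cases k <;> simp [esymmThreeBalanced, Nat.choose] at h6 ⊢ <;>
  · zify [show 1 ≤ 5 * v by omega, show 2 ≤ 5 * v by omega] at h6 ⊢
    nlinarith

theorem Multiset.two_mul_esymm_three_lt_choose {M : Multiset ℕ} (hM : card M = 5)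
    (hm : 73 ≤ M.sum) : 2 * M.esymm 3 < M.sum.choose 3 := by
  obtain ⟨N, v, hN, hsum, hbal, hle⟩ := exists_balanced_esymm_le M
  obtain ⟨k, hk, hNsum, hNe⟩ := exists_esymm_three_eq_of_balanced (hN.trans hM) hbal
  rw [← hsum, hNsum] at hm ⊢
  calc 2 * M.esymm 3 ≤ 2 * N.esymm 3 := Nat.mul_le_mul_left 2 (hle 3)
    _ < _ := hNe ▸ two_mul_esymmThreeBalanced_lt_choose hk hm

theorem Multiset.twelve_mul_choose_le_esymm_three {N : Multiset ℕ} {v : ℕ} (hN : card N = 5)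
    (hbal : ∀ x ∈ N, x = v ∨ x = v + 1) : 12 * N.sum.choose 3 ≤ 25 * N.esymm 3 := by
  obtain ⟨k, hk, hsum, he⟩ := exists_esymm_three_eq_of_balanced hN hbal
  rw [hsum, he]
  exact twelve_mul_choose_le_esymmThreeBalanced hk

section Rainbow

variable {α κ : Type*}

noncomputable def rainbowSubsets (c : α → κ) (k : ℕ) (S : Finset α) : Finset (Finset α) :=
  {t ∈ S.powersetCard k | Set.InjOn c t}

@[simp]
theorem mem_rainbowSubsets {c : α → κ} {k : ℕ} {S t : Finset α} :
    t ∈ rainbowSubsets c k S ↔ t ⊆ S ∧ #t = k ∧ Set.InjOn c t := by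
  simp [rainbowSubsets, and_assoc]

theorem rainbowSubsets_zero (c : α → κ) (S : Finset α) : rainbowSubsets c 0 S = {∅} := by
  ext t
  simp only [mem_rainbowSubsets, card_eq_zero, mem_singleton]
  exact ⟨fun h => h.2.1, by rintro rfl; simp⟩

theorem card_rainbowSubsets_succ_not_subset [DecidableEq α] [DecidableEq κ] (c : α → κ)
    (S : Finset α) {i : κ} {K : Finset κ} (hi : i ∉ K) (k : ℕ) :
    #{t ∈ rainbowSubsets c (k + 1) {x ∈ S | c x ∈ insert i K} | ¬ t ⊆ {x ∈ S | c x ∈ K}} =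
      #{x ∈ S | c x = i} * #(rainbowSubsets c k {x ∈ S | c x ∈ K}) := by
  set A := {x ∈ S | c x ∈ K}
  have hA : A ⊆ {x ∈ S | c x ∈ insert i K} := fun x hx => by simp_all [A]
  have hcolour : ∀ ⦃t⦄, t ⊆ A → ∀ ⦃x⦄, c x = i → x ∉ t :=
    fun t htA x hx hxt => hi (hx ▸ (mem_filter.1 (htA hxt)).2)
  rw [← card_product]
  -- such a set is its unique vertex of colour `i` added to a rainbow `k`-subset of `A`
  refine (card_nbij (fun p => insert p.1 p.2) ?_ ?_ ?_).symm
  · rintro ⟨x, t⟩ hxt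
    simp only [coe_product, Set.mem_prod, mem_coe, mem_filter, mem_rainbowSubsets] at hxt ⊢
    obtain ⟨⟨hxS, hx⟩, htA, htk, htinj⟩ := hxt
    have hxt := hcolour htA hx
    refine ⟨⟨insert_subset (by simp [hxS, hx]) (htA.trans hA),
      by rw [card_insert_of_notMem hxt, htk], ?_⟩, fun h => hcolour h hx (mem_insert_self x t)⟩
    rw [coe_insert, Set.injOn_insert (by simpa using hxt)]
    exact ⟨htinj, fun ⟨y, hy, hyx⟩ => hcolour htA (hyx.trans hx) hy⟩
  · rintro ⟨x, t⟩ hxt ⟨x', t'⟩ hxt' h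
    simp only [coe_product, Set.mem_prod, mem_coe, mem_filter, mem_rainbowSubsets] at hxt hxt' h
    obtain ⟨⟨-, hx⟩, htA, -⟩ := hxt
    obtain ⟨⟨-, hx'⟩, ht'A, -⟩ := hxt'
    obtain rfl : x = x' :=
      (mem_insert.1 (h ▸ mem_insert_self x t)).resolve_right (hcolour ht'A hx)
    rw [Prod.mk.injEq, ← erase_insert (hcolour htA hx), h, erase_insert (hcolour ht'A hx')]
    exact ⟨rfl, rfl⟩
  · intro t ht
    simp only [coe_filter, Set.mem_ofPred_eq, mem_rainbowSubsets, not_subset] at ht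
    obtain ⟨⟨htT, htk, htinj⟩, x, hxt, hxA⟩ := ht
    have hxT := mem_filter.1 (htT hxt)
    have hx : c x = i :=
      (mem_insert.1 hxT.2).resolve_right fun h => hxA (mem_filter.2 ⟨hxT.1, h⟩)
    refine ⟨(x, t.erase x), ?_, insert_erase hxt⟩
    simp only [coe_product, Set.mem_prod, mem_coe, mem_filter, mem_rainbowSubsets]
    refine ⟨⟨hxT.1, hx⟩, fun y hy => ?_, by rw [card_erase_of_mem hxt, htk, Nat.add_sub_cancel],
      htinj.mono (coe_subset.2 (erase_subset x t))⟩
    obtain ⟨hyx, hyt⟩ := mem_erase.1 hy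
    have hyT := mem_filter.1 (htT hyt)
    have hcy : c y ≠ i := hx ▸ fun hc => hyx (htinj hyt hxt hc)
    simpa [A, hyT.1, hcy] using hyT.2

theorem card_rainbowSubsets_succ [DecidableEq α] [DecidableEq κ] (c : α → κ) (S : Finset α)
    {i : κ} {K : Finset κ} (hi : i ∉ K) (k : ℕ) :
    #(rainbowSubsets c (k + 1) {x ∈ S | c x ∈ insert i K}) =
      #{x ∈ S | c x = i} * #(rainbowSubsets c k {x ∈ S | c x ∈ K}) +
        #(rainbowSubsets c (k + 1) {x ∈ S | c x ∈ K}) := by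
  rw [← card_filter_add_card_filter_not (· ⊆ {x ∈ S | c x ∈ K}), add_comm,
    card_rainbowSubsets_succ_not_subset c S hi]
  congr 2
  ext t
  simp only [mem_filter, mem_rainbowSubsets]
  exact ⟨fun h => ⟨h.2, h.1.2⟩,
    fun h => ⟨⟨h.1.trans fun x hx => by simp_all, h.2⟩, h.1⟩⟩

theorem filter_subset_rainbowSubsets_univ [Fintype α] [DecidableEq α] (c : α → κ) (k : ℕ)
    (S : Finset α) :
    {t ∈ rainbowSubsets c k univ | t ⊆ S} = rainbowSubsets c k S := by
  ext t
  simp only [mem_filter, mem_rainbowSubsets, subset_univ, true_and]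
  tauto

variable [DecidableEq κ]

def colourClassSizes [Fintype κ] (c : α → κ) (S : Finset α) : Multiset ℕ :=
  univ.val.map fun i => #{x ∈ S | c x = i}

theorem card_colourClassSizes [Fintype κ] (c : α → κ) (S : Finset α) :
    Multiset.card (colourClassSizes c S) = Fintype.card κ := by
  simp [colourClassSizes]

theorem sum_colourClassSizes [Fintype κ] (c : α → κ) (S : Finset α) :
    (colourClassSizes c S).sum = #S := by
  rw [colourClassSizes, sum_map_val, card_eq_sum_card_fiberwise (fun x _ => mem_univ (c x))]

theorem card_rainbowSubsets_filter_mem [DecidableEq α] (c : α → κ) (S : Finset α)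
    (K : Finset κ) (k : ℕ) :
    #(rainbowSubsets c k {x ∈ S | c x ∈ K}) = (K.val.map fun i => #{x ∈ S | c x = i}).esymm k := by
  induction K using Finset.induction_on generalizing k with
  | empty =>
    rcases k with _ | k
    · simp [rainbowSubsets_zero, Multiset.esymm_zero_right]
    · simp [rainbowSubsets, Multiset.esymm_zero_succ]
  | insert i K hi ih =>
    rw [insert_val_of_notMem hi, Multiset.map_cons]
    rcases k with _ | k
    · simp [rainbowSubsets_zero, Multiset.esymm_zero_right]
    rw [Multiset.esymm_cons_succ, ← ih, ← ih, card_rainbowSubsets_succ c S hi]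

theorem card_rainbowSubsets [DecidableEq α] [Fintype κ] (c : α → κ) (k : ℕ) (S : Finset α) :
    #(rainbowSubsets c k S) = (colourClassSizes c S).esymm k := by
  simpa [colourClassSizes] using card_rainbowSubsets_filter_mem c S univ k

end Rainbow

theorem two_mul_card_rainbowSubsets_three_lt {α : Type*} [DecidableEq α] (c : α → Fin 5)
    {S : Finset α} (hS : 73 ≤ #S) : 2 * #(rainbowSubsets c 3 S) < (#S).choose 3 := by
  have h := Multiset.two_mul_esymm_three_lt_choose
    ((card_colourClassSizes c S).trans (Fintype.card_fin 5))
    ((sum_colourClassSizes c S).symm ▸ hS)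
  rwa [sum_colourClassSizes, ← card_rainbowSubsets] at h

theorem card_filter_ofNat_eq (n q : ℕ) [NeZero q] (i : Fin q) :
    #{x : Fin n | Fin.ofNat q x = i} = n / q + if (i : ℕ) < n % q then 1 else 0 := by
  have h := Nat.count_modEq_card n (Nat.pos_of_neZero q) i
  rw [Nat.mod_eq_of_lt i.isLt, Nat.count_eq_card_filter_range] at h
  rw [← h, ← Nat.Iio_eq_range, ← Fin.map_valEmbedding_univ, filter_map, card_map]
  congr 1
  ext x
  simp [Fin.ext_iff, Nat.ModEq, Nat.mod_eq_of_lt i.isLt]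

theorem twelve_mul_choose_le_card_rainbowSubsets_ofNat (n : ℕ) :
    12 * n.choose 3 ≤ 25 * #(rainbowSubsets (fun x : Fin n => Fin.ofNat 5 x) 3 univ) := by
  have h := Multiset.twelve_mul_choose_le_esymm_three (v := n / 5)
    ((card_colourClassSizes (fun x : Fin n => Fin.ofNat 5 x) univ).trans (Fintype.card_fin 5))
    (by
      simp only [colourClassSizes, Multiset.mem_map, mem_val, mem_univ, true_and]
      rintro _ ⟨i, rfl⟩
      rw [card_filter_ofNat_eq]
      split_ifs <;> simp)
  rwa [sum_colourClassSizes, card_univ, Fintype.card_fin, ← card_rainbowSubsets] at h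

theorem PairArrows.compl {r n e m f : ℕ} (h : PairArrows r n e m f) (he : e ≤ n.choose r) :
    PairArrows r n (n.choose r - e) m (m.choose r - f) := by
  intro G hG hGcard
  have hGsub : G ⊆ powersetCard r univ := fun t ht => mem_powersetCard.2 ⟨subset_univ t, hG t ht⟩
  obtain ⟨S, hS, hSf⟩ := h (powersetCard r univ \ G)
    (fun t ht => (mem_powersetCard.1 (mem_sdiff.1 ht).1).2)
    (by rw [card_sdiff_of_subset hGsub, card_powersetCard, card_univ, Fintype.card_fin, hGcard]
        omega)
  refine ⟨S, hS, ?_⟩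
  have hsplit : G.filter (· ⊆ S) = powersetCard r S \ (powersetCard r univ \ G).filter (· ⊆ S) := by
    ext t
    simp only [mem_filter, mem_sdiff, mem_powersetCard, subset_univ, true_and]
    have := hG t
    tauto
  rw [hsplit, card_sdiff_of_subset, card_powersetCard, hS, hSf]
  intro t ht
  simp only [mem_filter, mem_sdiff, mem_powersetCard] at ht ⊢
  exact ⟨ht.2, ht.1.1.2⟩

section Sparse

variable {r n m : ℕ} {H : Finset (Finset (Fin n))}

theorem lt_card_of_pairArrows (hH : ∀ t ∈ H, #t = r)
    (hsparse : ∀ S : Finset (Fin n), #S = m → 2 * #{t ∈ H | t ⊆ S} < m.choose r) {e f : ℕ}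
    (hf : m.choose r ≤ 2 * f) (h : PairArrows r n e m f) : #H < e := by
  by_contra! he
  obtain ⟨G, hGH, hG⟩ := exists_subset_card_eq he
  obtain ⟨S, hS, hSf⟩ := h G (fun t ht => hH t (hGH ht)) hG
  have hGS := card_le_card (filter_subset_filter (· ⊆ S) hGH)
  have := hsparse S hS
  omega

theorem card_filter_pairArrows_le (hH : ∀ t ∈ H, #t = r)
    (hsparse : ∀ S : Finset (Fin n), #S = m → 2 * #{t ∈ H | t ⊆ S} < m.choose r) (f : ℕ) :
    #{e ∈ range (n.choose r + 1) | PairArrows r n e m f} ≤ n.choose r - #H := by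
  rcases le_or_gt (m.choose r) (2 * f) with hf | hf
  · calc _ ≤ #(Ioc #H (n.choose r)) := card_le_card fun e he => by
          simp only [mem_filter, mem_range, mem_Ioc] at he ⊢
          exact ⟨lt_card_of_pairArrows hH hsparse hf he.2, by omega⟩
      _ = _ := Nat.card_Ioc _ _
  · calc _ ≤ #(range (n.choose r - #H)) := card_le_card fun e he => by
          simp only [mem_filter, mem_range] at he ⊢
          have := lt_card_of_pairArrows hH hsparse (by omega) (he.2.compl (by omega))
          omega
      _ = _ := card_range _

end Sparse

theorem sigma_three_le_thirteen_twentyfifths_general (m f : ℕ) (hm : 73 ≤ m) :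
    sigmaR 3 m f ≤ 13 / 25 := by
  refine Filter.limsup_le_of_le (Filter.isCoboundedUnder_le_of_le Filter.atTop
    fun n => by positivity) (Filter.Eventually.of_forall fun n => ?_)
  have hcount := card_filter_pairArrows_le
    (m := m) (H := rainbowSubsets (fun x : Fin n => Fin.ofNat 5 x) 3 univ)
    (fun t ht => (mem_rainbowSubsets.1 ht).2.1)
    (fun S hS => by
      rw [filter_subset_rainbowSubsets_univ, ← hS]
      exact two_mul_card_rainbowSubsets_three_lt _ (hS ▸ hm)) f
  have hH := twelve_mul_choose_le_card_rainbowSubsets_ofNat n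
  have h25 : #{e ∈ range (n.choose 3 + 1) | PairArrows 3 n e m f} * 25 ≤ 13 * n.choose 3 := by
    omega
  refine div_le_of_le_mul₀ (by positivity) (by norm_num) ?_
  rw [div_mul_eq_mul_div, le_div_iff₀ (by norm_num)]
  exact_mod_cast h25

theorem sigma_three_le_thirteen_twentyfifths (m f : ℕ) (hm : 73 ≤ m)
    (hf0 : 0 < f) (hf : f < m.choose 3) :
    sigmaR 3 m f ≤ 13 / 25 :=
  sigma_three_le_thirteen_twentyfifths_general m f hm
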